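/- arXiv:2012.13887 — 2 statements merged into one kernel-verified Lean document; each statement's English description precedes it below -/
import Mathlib

section
/- Let α ∈ (0,2), β > 0, C₀ ∈ ℝ, and choose λ₀ ∈ (0,1] small enough that 2β/(2-α) + C₀ λ₀^{2-α} > 0. Define F(λ) := ∫_λ^{λ₀} μ^{-(α/2+1)} (2β/(2-α) + C₀ μ^{2-α})^{-1/2} dμ for λ ∈ (0, λ₀]. Then there are constants C > 0 and λ̄ ∈ (0, λ₀] such that for all λ ∈ (0, λ̄], |F(λ) − 2/(α λ^{α/2} √(2β/(2-α)))| ≤ C (λ^{-α/4} + λ^{2 - 3α/2}). -/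
/-!
Write `A = 2β/(2-α)`. Replacing `A + C₀ μ^(2-α)` by `A` in the integrand leaves `μ^(-(α/2+1))/√A`,
whose integral over `[λ, λ₀]` is `2/(α λ^(α/2) √A)` minus a constant. On `(0, λ₀]` the quantity
`A + C₀ μ^(2-α)` stays above `m = min A (A + C₀ λ₀^(2-α)) > 0`, where `t ↦ t^(-1/2)` is
`1/(2 m √m)`-Lipschitz, so the error made in the integrand is `O(μ^(1-3α/2))`. Its integral over
`[λ, λ₀]` is `O(λ^(-α/4) + λ^(2-3α/2))`, the term `λ^(-α/4)` absorbing the logarithm at `α = 4/3`.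
-/

open Real Set intervalIntegral

lemma abs_inv_sqrt_sub_inv_sqrt_le {m x y : ℝ} (hm : 0 < m) (hx : m ≤ x) (hy : m ≤ y) :
    |(√x)⁻¹ - (√y)⁻¹| ≤ |x - y| / (2 * m * √m) := by
  have hsm : 0 < √m := sqrt_pos.2 hm
  have hmx : √m ≤ √x := sqrt_le_sqrt hx
  have hmy : √m ≤ √y := sqrt_le_sqrt hy
  have hsx : 0 < √x := hsm.trans_le hmx
  have hsy : 0 < √y := hsm.trans_le hmy
  have hdiff : (√x)⁻¹ - (√y)⁻¹ = (y - x) / (√x * √y * (√x + √y)) := by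
    rw [← sq_sqrt (hm.le.trans hx), ← sq_sqrt (hm.le.trans hy), sqrt_sq hsx.le, sqrt_sq hsy.le]
    field_simp
    ring
  have hden : 2 * m * √m ≤ √x * √y * (√x + √y) :=
    calc 2 * m * √m = √m * √m * (√m + √m) := by rw [mul_self_sqrt hm.le]; ring
      _ ≤ √x * √y * (√x + √y) := by gcongr
  rw [hdiff, abs_div, abs_of_pos (by positivity : 0 < √x * √y * (√x + √y)), abs_sub_comm y x]
  exact div_le_div_of_nonneg_left (abs_nonneg _) (by positivity) hden

lemma min_le_add_mul_rpow {A C s x L : ℝ} (hs : 0 ≤ s) (hx : 0 ≤ x) (hxL : x ≤ L) :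
    min A (A + C * L ^ s) ≤ A + C * x ^ s := by
  rcases le_total 0 C with hC | hC
  · exact (min_le_left _ _).trans (le_add_of_nonneg_right (by positivity))
  · exact (min_le_right _ _).trans
      (add_le_add_right (mul_le_mul_of_nonpos_left (rpow_le_rpow hx hxL hs) hC) A)

lemma integral_rpow_of_pos {r l L : ℝ} (hr : r ≠ -1) (hl : 0 < l) (hlL : l ≤ L) :
    ∫ x in l..L, x ^ r = (L ^ (r + 1) - l ^ (r + 1)) / (r + 1) :=
  integral_rpow (Or.inr ⟨hr, notMem_uIcc_of_lt hl (hl.trans_le hlL)⟩)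

lemma integral_rpow_le_of_lt_neg_one {r l L : ℝ} (hr : r < -1) (hl : 0 < l) (hlL : l ≤ L) :
    ∫ x in l..L, x ^ r ≤ l ^ (r + 1) / -(r + 1) := by
  have hL : 0 ≤ L ^ (r + 1) := rpow_nonneg (hl.le.trans hlL) _
  rw [integral_rpow_of_pos hr.ne hl hlL, ← neg_div_neg_eq, neg_sub]
  gcongr
  · linarith
  · linarith

/-- The term `l^(-ε)` absorbs the logarithmic divergence at `r = -1`. -/
lemma integral_rpow_le {ε r l L : ℝ} (hε : 0 < ε) (hl : 0 < l) (hlL : l ≤ L) (hL : L ≤ 1) :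
    ∫ x in l..L, x ^ r ≤ (l ^ (-ε) + l ^ (r + 1)) / ε := by
  have hlε : 0 ≤ l ^ (-ε) := rpow_nonneg hl.le _
  have hlr : 0 ≤ l ^ (r + 1) := rpow_nonneg hl.le _
  rcases le_or_gt (r + 1) (-ε) with hr | hr
  · calc ∫ x in l..L, x ^ r ≤ l ^ (r + 1) / -(r + 1) :=
          integral_rpow_le_of_lt_neg_one (by linarith) hl hlL
      _ ≤ l ^ (r + 1) / ε := by gcongr; linarith
      _ ≤ (l ^ (-ε) + l ^ (r + 1)) / ε := by gcongr; linarith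
  · have hint : ∀ q : ℝ, IntervalIntegrable (fun x : ℝ => x ^ q) MeasureTheory.volume l L :=
      fun q => intervalIntegrable_rpow (Or.inr (notMem_uIcc_of_lt hl (hl.trans_le hlL)))
    calc ∫ x in l..L, x ^ r ≤ ∫ x in l..L, x ^ (-ε - 1) :=
          integral_mono_on hlL (hint r) (hint _) fun x hx =>
            rpow_le_rpow_of_exponent_ge (hl.trans_le hx.1) (hx.2.trans hL) (by linarith)
      _ ≤ l ^ (-ε - 1 + 1) / -(-ε - 1 + 1) :=
          integral_rpow_le_of_lt_neg_one (by linarith) hl hlL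
      _ ≤ (l ^ (-ε) + l ^ (r + 1)) / ε := by
          rw [sub_add_cancel, neg_neg]; gcongr; linarith

lemma abs_integral_rpow_mul_rpow_sub_le {A C s a m l L : ℝ} (hm : 0 < m) (hmA : m ≤ A)
    (ha : 0 < a) (hl : 0 < l) (hlL : l ≤ L) (hG : ∀ x ∈ Icc l L, m ≤ A + C * x ^ s) :
    |(∫ x in l..L, x ^ (-(a + 1)) * (A + C * x ^ s) ^ (-(1 / 2) : ℝ)) -
        (l ^ (-a) - L ^ (-a)) / (a * √A)|
      ≤ |C| / (2 * m * √m) * ∫ x in l..L, x ^ (s - a - 1) := by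
  have hpow : ∀ q : ℝ, IntervalIntegrable (fun x : ℝ => x ^ q) MeasureTheory.volume l L :=
    fun q => intervalIntegrable_rpow (Or.inr (notMem_uIcc_of_lt hl (hl.trans_le hlL)))
  have hGpos : ∀ x ∈ Icc l L, 0 < A + C * x ^ s := fun x hx => hm.trans_le (hG x hx)
  have hf : IntervalIntegrable (fun x => x ^ (-(a + 1)) * (A + C * x ^ s) ^ (-(1 / 2) : ℝ))
      MeasureTheory.volume l L := by
    refine ContinuousOn.intervalIntegrable ?_
    rw [uIcc_of_le hlL]
    refine (continuousOn_id.rpow_const fun x hx => Or.inl (hl.trans_le hx.1).ne').mul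
      ((continuousOn_const.add (continuousOn_const.mul
        (continuousOn_id.rpow_const fun x hx => Or.inl (hl.trans_le hx.1).ne'))).rpow_const
          fun x hx => Or.inl (hGpos x hx).ne')
  have hmain : ∫ x in l..L, x ^ (-(a + 1)) / √A = (l ^ (-a) - L ^ (-a)) / (a * √A) := by
    rw [integral_div, integral_rpow_of_pos (by linarith) hl hlL, show -(a + 1) + 1 = -a by ring]
    field_simp
    ring
  rw [← hmain, ← integral_sub hf ((hpow _).div_const _), ← Real.norm_eq_abs,
    ← integral_const_mul]
  refine norm_integral_le_of_norm_le hlL (MeasureTheory.ae_of_all _ fun x hx => ?_)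
    ((hpow _).const_mul _)
  have hx0 : 0 < x := hl.trans hx.1
  have hxs : 0 ≤ x ^ s := rpow_nonneg hx0.le s
  have hGx := hG x (Ioc_subset_Icc_self hx)
  have hsqrt : |(√(A + C * x ^ s))⁻¹ - (√A)⁻¹| ≤ |C| * x ^ s / (2 * m * √m) := by
    simpa [abs_mul, abs_of_nonneg hxs] using abs_inv_sqrt_sub_inv_sqrt_le hm hGx hmA
  rw [rpow_neg (hm.le.trans hGx), ← sqrt_eq_rpow, div_eq_mul_inv, ← mul_sub, norm_mul,
    norm_of_nonneg (rpow_nonneg hx0.le _), Real.norm_eq_abs]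
  calc x ^ (-(a + 1)) * |(√(A + C * x ^ s))⁻¹ - (√A)⁻¹|
      ≤ x ^ (-(a + 1)) * (|C| * x ^ s / (2 * m * √m)) := by gcongr
    _ = |C| / (2 * m * √m) * x ^ (s - a - 1) := by
      rw [show s - a - 1 = -(a + 1) + s by ring, rpow_add hx0]
      ring

/-- asymptotics of
F(λ) = ∫_λ^{λ₀} μ^{-(α/2+1)} (2β/(2-α)+C₀μ^{2-α})^{-1/2} dμ as λ ↘ 0:
|F(λ) - 2/(αλ^{α/2}√(2β/(2-α)))| ≤ C(λ^{-α/4} + λ^{2-3α/2}) for small λ. -/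
theorem stmt10 (α β C₀ lam₀ : ℝ) (hα : α ∈ Set.Ioo (0 : ℝ) 2) (hβ : 0 < β)
    (hlam₀ : lam₀ ∈ Set.Ioc (0 : ℝ) 1)
    (hpos : 0 < 2 * β / (2 - α) + C₀ * lam₀ ^ (2 - α)) :
    ∃ C > (0 : ℝ), ∃ lb ∈ Set.Ioc (0 : ℝ) lam₀, ∀ l ∈ Set.Ioc (0 : ℝ) lb,
      |(∫ μ in l..lam₀,
          μ ^ (-(α / 2 + 1)) * (2 * β / (2 - α) + C₀ * μ ^ (2 - α)) ^ (-(1 / 2) : ℝ)) -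
        2 / (α * l ^ (α / 2) * Real.sqrt (2 * β / (2 - α)))|
      ≤ C * (l ^ (-(α / 4)) + l ^ (2 - 3 * α / 2)) := by
  obtain ⟨hα0, hα2⟩ := hα
  obtain ⟨hL0, hL1⟩ := hlam₀
  set A := 2 * β / (2 - α)
  have hA : 0 < A := div_pos (by linarith) (by linarith)
  set m := min A (A + C₀ * lam₀ ^ (2 - α))
  have hm : 0 < m := lt_min hA hpos
  set K := |C₀| / (2 * m * √m)
  set c := lam₀ ^ (-(α / 2)) / (α / 2 * √A)
  have hc : 0 ≤ c := by positivity
  refine ⟨K * (4 / α) + c + 1, by positivity, lam₀, ⟨hL0, le_rfl⟩, ?_⟩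
  rintro l ⟨hl, hlL⟩
  have hcore := abs_integral_rpow_mul_rpow_sub_le (a := α / 2) hm (min_le_left _ _)
    (by positivity) hl hlL fun x hx => min_le_add_mul_rpow (by linarith) (hl.le.trans hx.1) hx.2
  have hleading : (l ^ (-(α / 2)) - lam₀ ^ (-(α / 2))) / (α / 2 * √A)
      = 2 / (α * l ^ (α / 2) * √A) - c := by
    rw [rpow_neg hl.le]
    simp only [c]
    field_simp
  set E := l ^ (-(α / 4)) + l ^ (2 - 3 * α / 2)
  have hJ : ∫ x in l..lam₀, x ^ (2 - α - α / 2 - 1) ≤ E / (α / 4) := by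
    simpa only [show 2 - α - α / 2 - 1 + 1 = 2 - 3 * α / 2 by ring] using
      integral_rpow_le (r := 2 - α - α / 2 - 1) (by positivity) hl hlL hL1
  have hE : 1 ≤ E := (one_le_rpow_of_pos_of_le_one_of_nonpos hl (hlL.trans hL1)
    (by linarith)).trans (le_add_of_nonneg_right (by positivity))
  rw [hleading] at hcore
  calc _ ≤ |(∫ μ in l..lam₀, μ ^ (-(α / 2 + 1)) * (A + C₀ * μ ^ (2 - α)) ^ (-(1 / 2) : ℝ)) -
          (2 / (α * l ^ (α / 2) * √A) - c)| + c := by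
        refine (abs_sub_le _ (2 / (α * l ^ (α / 2) * √A) - c) _).trans_eq ?_
        rw [sub_sub_cancel_left, abs_neg, abs_of_nonneg hc]
    _ ≤ K * (E / (α / 4)) + c * E := by
        gcongr
        · exact hcore.trans (by gcongr)
        · exact le_mul_of_one_le_right (by positivity) hE
    _ ≤ (K * (4 / α) + c + 1) * E := by
        have : K * (E / (α / 4)) = K * (4 / α) * E := by field_simp
        linarith
end

section
/- Let N ≥ 4 and F(z) := (1/(2+4/N))|z|^{2+4/N}. For all P, ε ∈ ℂ, the pointwise estimate |F(P+ε) − F(P) − dF(P)(ε) − ½d²F(P)(ε,ε)| ≲ |ε|^{4/N+2} + |P|^{4/N−1}|ε|³·𝟙_{2|ε|<|P|} holds; in particular when 2|ε| ≥ |P| the left side is bounded by C|ε|^{4/N+2}, and when 2|ε| < |P| it is bounded by C|P|^{4/N−1}|ε|³ ≤ C'|ε|^{4/N+2}. -/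
noncomputable section

/-- F(z) = |z|^{2+4/N}/(2+4/N). -/
def FNL (N : ℕ) (z : ℂ) : ℝ := ‖z‖ ^ (2 + (4 : ℝ) / N) / (2 + (4 : ℝ) / N)

/-!
Write `α = 2 + 4/N ∈ (2, 3]` and `F z = ‖z‖ ^ α / α`. Then `dF(P) ε = ‖P‖^(α-2) ⟪P, ε⟫` and
`d²F(P)(ε, ε) = ‖P‖^(α-2) ‖ε‖² + (α-2) ‖P‖^(α-4) ⟪P, ε⟫²`, also at `P = 0`, where both vanish.

If `2‖ε‖ < ‖P‖`, the segment from `P` to `P + ε` avoids the ball of radius `‖P‖/2`, and the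
Taylor remainder along it is controlled by the third derivative of `t ↦ F(P + tε)`, which is at
most `3 ‖z‖^(α-3) ‖ε‖³ ≤ 6 ‖P‖^(α-3) ‖ε‖³` there since `α - 3 ≤ 0`. If `‖P‖ ≤ 2‖ε‖`, each of the
four terms of the remainder is at most `(3‖ε‖)^α`. Finally `‖P‖^(α-3) ‖ε‖³ ≤ ‖ε‖^α` whenever
`‖ε‖ ≤ ‖P‖`, again because `α ≤ 3`.
-/

open Set Real Asymptotics Topology
open scoped RealInnerProductSpace

theorem abs_sub_le_of_hasDerivAt_of_abs_le {f f' : ℝ → ℝ} {C : ℝ}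
    (hf : ∀ t ∈ Icc (0 : ℝ) 1, HasDerivAt f (f' t) t) (hC : ∀ t ∈ Icc (0 : ℝ) 1, |f' t| ≤ C)
    {t : ℝ} (ht : t ∈ Icc (0 : ℝ) 1) : |f t - f 0| ≤ C := by
  have hC0 : 0 ≤ C := (abs_nonneg _).trans (hC 0 (left_mem_Icc.2 zero_le_one))
  have h := norm_image_sub_le_of_norm_deriv_le_segment' (fun t ht => (hf t ht).hasDerivWithinAt)
    (fun t ht => hC t (Ico_subset_Icc_self ht)) t ht
  rw [Real.norm_eq_abs, sub_zero] at h
  nlinarith [ht.2]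

theorem abs_sub_taylor_two_le {g g' g'' g''' : ℝ → ℝ} {M : ℝ}
    (hg : ∀ t ∈ Icc (0 : ℝ) 1, HasDerivAt g (g' t) t)
    (hg' : ∀ t ∈ Icc (0 : ℝ) 1, HasDerivAt g' (g'' t) t)
    (hg'' : ∀ t ∈ Icc (0 : ℝ) 1, HasDerivAt g'' (g''' t) t)
    (hM : ∀ t ∈ Icc (0 : ℝ) 1, |g''' t| ≤ M) :
    |g 1 - g 0 - g' 0 - 1 / 2 * g'' 0| ≤ M := by
  have h₂ : ∀ t ∈ Icc (0 : ℝ) 1, |g'' t - g'' 0| ≤ M := fun t ht =>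
    abs_sub_le_of_hasDerivAt_of_abs_le hg'' hM ht
  have h₁ : ∀ t ∈ Icc (0 : ℝ) 1, |g' t - g' 0 - t * g'' 0| ≤ M := fun t ht => by
    simpa using abs_sub_le_of_hasDerivAt_of_abs_le (f := fun t => g' t - g' 0 - t * g'' 0)
      (fun t ht => ((hg' t ht).sub_const (g' 0)).sub (hasDerivAt_mul_const (g'' 0))) h₂ ht
  have h₀ := abs_sub_le_of_hasDerivAt_of_abs_le
    (f := fun t => g t - g 0 - t * g' 0 - t ^ 2 / 2 * g'' 0)
    (fun t ht => ((((hg t ht).sub_const (g 0)).sub (hasDerivAt_mul_const (g' 0))).sub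
      (((hasDerivAt_pow 2 t).div_const 2).mul_const (g'' 0))).congr_deriv (by push_cast; ring))
    h₁ (right_mem_Icc.2 zero_le_one)
  convert h₀ using 2
  ring

theorem rpow_sub_two_mul_sq {x α : ℝ} (hx : 0 ≤ x) (hα : α ≠ 0) : x ^ (α - 2) * x ^ 2 = x ^ α := by
  rw [← rpow_natCast, ← rpow_add' hx (by simpa using hα)]
  norm_num

theorem rpow_le_two_mul_rpow_of_half_le {x s γ : ℝ} (hx : 0 < x) (hs : x / 2 ≤ s)
    (hγ : γ ∈ Icc (-1 : ℝ) 0) : s ^ γ ≤ 2 * x ^ γ :=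
  calc s ^ γ ≤ (x / 2) ^ γ := rpow_le_rpow_of_nonpos (half_pos hx) hs hγ.2
    _ = 2 ^ (-γ) * x ^ γ := by rw [div_rpow hx.le zero_le_two, rpow_neg zero_le_two]; ring
    _ ≤ 2 ^ (1 : ℝ) * x ^ γ := by gcongr <;> linarith [hγ.1]
    _ = 2 * x ^ γ := by rw [rpow_one]

theorem rpow_sub_three_mul_pow_three_le {α x e : ℝ} (hα : 0 < α) (hα3 : α ≤ 3) (he : 0 ≤ e)
    (hex : e ≤ x) : x ^ (α - 3) * e ^ 3 ≤ e ^ α := by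
  rcases he.eq_or_lt with rfl | he
  · simp [zero_rpow hα.ne']
  calc x ^ (α - 3) * e ^ 3 ≤ e ^ (α - 3) * e ^ 3 :=
        mul_le_mul_of_nonneg_right (rpow_le_rpow_of_nonpos he hex (by linarith)) (by positivity)
    _ = e ^ α := by rw [← rpow_add_natCast he.ne']; norm_num

-- With `s = ‖z‖`, `i = ⟪z, ε⟫`, `e = ‖ε‖` for `z = P + t • ε`, the expression is the third
-- derivative of `t ↦ ‖P + t • ε‖ ^ α / α`.
theorem abs_third_deriv_norm_rpow_le {α s e i : ℝ} (hα2 : 2 < α) (hα3 : α ≤ 3) (hs : 0 < s)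
    (hi : |i| ≤ s * e) :
    |3 * (α - 2) * s ^ (α - 4) * i * e ^ 2 + (α - 2) * (α - 4) * s ^ (α - 6) * i ^ 3| ≤
      3 * s ^ (α - 3) * e ^ 3 := by
  have he : 0 ≤ e := (mul_nonneg_iff_of_pos_left hs).1 ((abs_nonneg i).trans hi)
  have hA : 0 < s ^ (α - 6) := rpow_pos_of_pos hs _
  have hpow (n : ℕ) : s ^ (α - 6 + n) = s ^ (α - 6) * s ^ n := rpow_add_natCast hs.ne' _ _
  rw [show s ^ (α - 4) = s ^ (α - 6) * s ^ 2 by rw [← hpow]; push_cast; ring_nf,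
    show s ^ (α - 3) = s ^ (α - 6) * s ^ 3 by rw [← hpow]; push_cast; ring_nf]
  have hi2 : i ^ 2 ≤ (s * e) ^ 2 := sq_le_sq' (abs_le.1 hi).1 (abs_le.1 hi).2
  set Q := 3 * s ^ 2 * e ^ 2 + (α - 4) * i ^ 2
  have hQ : 0 ≤ Q := by nlinarith
  calc |3 * (α - 2) * (s ^ (α - 6) * s ^ 2) * i * e ^ 2 + (α - 2) * (α - 4) * s ^ (α - 6) * i ^ 3|
      = (α - 2) * s ^ (α - 6) * |i| * Q := by
        rw [show 3 * (α - 2) * (s ^ (α - 6) * s ^ 2) * i * e ^ 2 +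
            (α - 2) * (α - 4) * s ^ (α - 6) * i ^ 3 = (α - 2) * s ^ (α - 6) * i * Q by ring,
          abs_mul, abs_mul, abs_mul, abs_of_pos (by linarith), abs_of_pos hA, abs_of_nonneg hQ]
    _ ≤ 1 * s ^ (α - 6) * (s * e) * (3 * s ^ 2 * e ^ 2) := by
        gcongr
        · linarith
        · nlinarith
    _ = 3 * (s ^ (α - 6) * s ^ 3) * e ^ 3 := by ring

theorem half_norm_le_norm_add_smul {F : Type*} [SeminormedAddCommGroup F] [NormedSpace ℝ F]
    {P ε : F} (h : 2 * ‖ε‖ ≤ ‖P‖) {t : ℝ} (ht : t ∈ Icc (0 : ℝ) 1) : ‖P‖ / 2 ≤ ‖P + t • ε‖ := by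
  have h₁ := norm_sub_norm_le P (-(t • ε))
  have h₂ : ‖t • ε‖ ≤ ‖ε‖ := by
    rw [norm_smul, norm_of_nonneg ht.1]
    exact mul_le_of_le_one_left (norm_nonneg ε) ht.2
  rw [norm_neg, sub_neg_eq_add] at h₁
  linarith

def secondOrderRemainder {F : Type*} [NormedAddCommGroup F] [NormedSpace ℝ F]
    (f : F → ℝ) (P ε : F) : ℝ :=
  f (P + ε) - f P - fderiv ℝ f P ε - (1 / 2) * fderiv ℝ (fun z => fderiv ℝ f z ε) P ε

section NormRpow

variable {E : Type*} [NormedAddCommGroup E] [InnerProductSpace ℝ E]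

theorem hasFDerivAt_norm_rpow_of_ne_zero {z : E} (hz : z ≠ 0) (q : ℝ) :
    HasFDerivAt (fun z : E => ‖z‖ ^ q) ((q * ‖z‖ ^ (q - 2)) • innerSL ℝ z) z := by
  convert (hasStrictFDerivAt_norm_sq z).hasFDerivAt.rpow_const (p := q / 2) (by simp [hz]) using 1
  · ext w
    rw [← Real.rpow_natCast_mul (norm_nonneg _)]
    ring_nf
  · simp_rw [← Real.rpow_natCast_mul (norm_nonneg _), ← Nat.cast_smul_eq_nsmul ℝ, smul_smul]
    ring_nf

theorem hasDerivAt_norm_rpow_add_smul {P ε : E} {t : ℝ} (h : P + t • ε ≠ 0) (q : ℝ) :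
    HasDerivAt (fun t : ℝ => ‖P + t • ε‖ ^ q)
      (q * ‖P + t • ε‖ ^ (q - 2) * ⟪P + t • ε, ε⟫) t := by
  refine ((hasFDerivAt_norm_rpow_of_ne_zero h q).comp_hasDerivAt t
    (((hasDerivAt_id t).smul_const ε).const_add P)).congr_deriv ?_
  simp only [smul_apply, innerSL_apply_apply, one_smul, smul_eq_mul]

theorem hasDerivAt_inner_add_smul (P ε : E) (t : ℝ) :
    HasDerivAt (fun t : ℝ => ⟪P + t • ε, ε⟫) (‖ε‖ ^ 2) t := by
  refine ((((hasDerivAt_id t).smul_const ε).const_add P).inner ℝ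
    (hasDerivAt_const t ε)).congr_deriv ?_
  simp

theorem hasFDerivAt_norm_rpow_mul_inner_zero {q : ℝ} (hq : 0 < q) (ε : E) :
    HasFDerivAt (fun z : E => ‖z‖ ^ q * ⟪z, ε⟫) (0 : E →L[ℝ] ℝ) 0 := by
  refine HasFDerivAt.of_isLittleO ?_
  have h₁ : (fun z : E => ‖z‖ ^ q) =o[𝓝 0] (fun _ => (1 : ℝ)) := by
    rw [isLittleO_one_iff]
    simpa [zero_rpow hq.ne'] using (continuous_norm.tendsto (0 : E)).rpow_const (Or.inr hq.le)
  have h₂ : (fun z : E => ⟪z, ε⟫) =O[𝓝 0] (fun z => ‖z‖) :=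
    .of_bound ‖ε‖ (.of_forall fun z => by simpa [mul_comm] using abs_real_inner_le_norm z ε)
  have h₃ : (fun z : E => ‖z‖) =O[𝓝 0] (fun z => z) := isBigO_norm_left.2 (isBigO_refl _ _)
  simpa using (h₁.mul_isBigO h₂).trans_isBigO (by simpa using h₃)

theorem hasFDerivAt_norm_rpow_div {α : ℝ} (hα : 1 < α) (z : E) :
    HasFDerivAt (fun z : E => ‖z‖ ^ α / α) (‖z‖ ^ (α - 2) • innerSL ℝ z) z := by
  refine (HasFDerivAt.mul_const (hasFDerivAt_norm_rpow z hα) α⁻¹).congr_fderiv ?_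
  rw [smul_smul]
  field_simp

theorem fderiv_norm_rpow_div_apply {α : ℝ} (hα : 1 < α) (z w : E) :
    fderiv ℝ (fun z : E => ‖z‖ ^ α / α) z w = ‖z‖ ^ (α - 2) * ⟪z, w⟫ := by
  simp [(hasFDerivAt_norm_rpow_div hα z).fderiv]

theorem fderiv_norm_rpow_mul_inner_apply {q : ℝ} (hq : 0 < q) (P ε : E) :
    fderiv ℝ (fun z : E => ‖z‖ ^ q * ⟪z, ε⟫) P ε =
      ‖P‖ ^ q * ‖ε‖ ^ 2 + q * ‖P‖ ^ (q - 2) * ⟪P, ε⟫ ^ 2 := by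
  rcases eq_or_ne P 0 with rfl | hP
  · simp [(hasFDerivAt_norm_rpow_mul_inner_zero hq ε).fderiv, zero_rpow hq.ne']
  · have h : HasFDerivAt (fun z : E => ‖z‖ ^ q * ⟪z, ε⟫) _ P :=
      (hasFDerivAt_norm_rpow_of_ne_zero hP q).mul
        ((hasFDerivAt_id P).inner ℝ (hasFDerivAt_const ε P))
    rw [h.fderiv]
    simp only [id_eq, add_apply, smul_apply, ContinuousLinearMap.comp_apply,
      ContinuousLinearMap.prod_apply, ContinuousLinearMap.id_apply, zero_apply,
      fderivInnerCLM_apply, inner_zero_right, real_inner_self_eq_norm_sq, zero_add, smul_eq_mul,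
      coe_innerSL_apply]
    ring

theorem secondOrderRemainder_norm_rpow_div {α : ℝ} (hα : 2 < α) (P ε : E) :
    secondOrderRemainder (fun z : E => ‖z‖ ^ α / α) P ε =
      ‖P + ε‖ ^ α / α - ‖P‖ ^ α / α - ‖P‖ ^ (α - 2) * ⟪P, ε⟫ -
        1 / 2 * (‖P‖ ^ (α - 2) * ‖ε‖ ^ 2 + (α - 2) * ‖P‖ ^ (α - 4) * ⟪P, ε⟫ ^ 2) := by
  have hα1 : 1 < α := by linarith
  have hD : (fun z => fderiv ℝ (fun z : E => ‖z‖ ^ α / α) z ε) =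
      fun z => ‖z‖ ^ (α - 2) * ⟪z, ε⟫ :=
    funext fun z => fderiv_norm_rpow_div_apply hα1 z ε
  rw [secondOrderRemainder, hD, fderiv_norm_rpow_div_apply hα1,
    fderiv_norm_rpow_mul_inner_apply (by linarith), show α - 2 - 2 = α - 4 by ring]

theorem abs_secondOrderRemainder_norm_rpow_div_le_of_two_mul_lt {α : ℝ} (hα2 : 2 < α)
    (hα3 : α ≤ 3) {P ε : E} (h : 2 * ‖ε‖ < ‖P‖) :
    |secondOrderRemainder (fun z : E => ‖z‖ ^ α / α) P ε| ≤ 6 * ‖P‖ ^ (α - 3) * ‖ε‖ ^ 3 := by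
  have hP : 0 < ‖P‖ := by linarith [norm_nonneg ε]
  have hlb (t : ℝ) (ht : t ∈ Icc (0 : ℝ) 1) := half_norm_le_norm_add_smul h.le ht
  have hne (t : ℝ) (ht : t ∈ Icc (0 : ℝ) 1) : P + t • ε ≠ 0 :=
    norm_pos_iff.1 ((half_pos hP).trans_le (hlb t ht))
  have hd₁ : ∀ t ∈ Icc (0 : ℝ) 1, HasDerivAt (fun t => ‖P + t • ε‖ ^ α / α)
      (‖P + t • ε‖ ^ (α - 2) * ⟪P + t • ε, ε⟫) t := fun t ht =>
    (HasDerivAt.div_const (hasDerivAt_norm_rpow_add_smul (hne t ht) α) α).congr_deriv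
      (by field_simp)
  have hd₂ : ∀ t ∈ Icc (0 : ℝ) 1, HasDerivAt (fun t => ‖P + t • ε‖ ^ (α - 2) * ⟪P + t • ε, ε⟫)
      (‖P + t • ε‖ ^ (α - 2) * ‖ε‖ ^ 2 + (α - 2) * ‖P + t • ε‖ ^ (α - 4) * ⟪P + t • ε, ε⟫ ^ 2)
      t := fun t ht =>
    ((hasDerivAt_norm_rpow_add_smul (hne t ht) (α - 2)).mul
      (hasDerivAt_inner_add_smul P ε t)).congr_deriv (by rw [show α - 2 - 2 = α - 4 by ring]; ring)
  have hd₃ : ∀ t ∈ Icc (0 : ℝ) 1, HasDerivAt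
      (fun t => ‖P + t • ε‖ ^ (α - 2) * ‖ε‖ ^ 2 +
        (α - 2) * ‖P + t • ε‖ ^ (α - 4) * ⟪P + t • ε, ε⟫ ^ 2)
      (3 * (α - 2) * ‖P + t • ε‖ ^ (α - 4) * ⟪P + t • ε, ε⟫ * ‖ε‖ ^ 2 +
        (α - 2) * (α - 4) * ‖P + t • ε‖ ^ (α - 6) * ⟪P + t • ε, ε⟫ ^ 3) t := fun t ht =>
    (((hasDerivAt_norm_rpow_add_smul (hne t ht) (α - 2)).mul_const (‖ε‖ ^ 2)).add
      (((hasDerivAt_norm_rpow_add_smul (hne t ht) (α - 4)).const_mul (α - 2)).mul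
        ((hasDerivAt_inner_add_smul P ε t).pow 2))).congr_deriv (by
      simp only [Pi.pow_apply]
      rw [show α - 2 - 2 = α - 4 by ring, show α - 4 - 2 = α - 6 by ring]
      push_cast
      ring)
  have hM : ∀ t ∈ Icc (0 : ℝ) 1,
      |3 * (α - 2) * ‖P + t • ε‖ ^ (α - 4) * ⟪P + t • ε, ε⟫ * ‖ε‖ ^ 2 +
        (α - 2) * (α - 4) * ‖P + t • ε‖ ^ (α - 6) * ⟪P + t • ε, ε⟫ ^ 3| ≤
        6 * ‖P‖ ^ (α - 3) * ‖ε‖ ^ 3 := fun t ht =>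
    calc _ ≤ 3 * ‖P + t • ε‖ ^ (α - 3) * ‖ε‖ ^ 3 :=
          abs_third_deriv_norm_rpow_le hα2 hα3 ((half_pos hP).trans_le (hlb t ht))
            (abs_real_inner_le_norm _ _)
      _ ≤ 3 * (2 * ‖P‖ ^ (α - 3)) * ‖ε‖ ^ 3 := by
          gcongr
          exact rpow_le_two_mul_rpow_of_half_le hP (hlb t ht) ⟨by linarith, by linarith⟩
      _ = 6 * ‖P‖ ^ (α - 3) * ‖ε‖ ^ 3 := by ring
  rw [secondOrderRemainder_norm_rpow_div hα2]
  simpa only [zero_smul, one_smul, add_zero] using abs_sub_taylor_two_le hd₁ hd₂ hd₃ hM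

theorem mul_rpow_sub_four_mul_inner_sq_le {α : ℝ} (hα2 : 2 < α) (hα3 : α ≤ 3) (P ε : E) :
    (α - 2) * ‖P‖ ^ (α - 4) * ⟪P, ε⟫ ^ 2 ≤ ‖P‖ ^ (α - 2) * ‖ε‖ ^ 2 := by
  have hP : ‖P‖ ^ (α - 4) * ‖P‖ ^ 2 = ‖P‖ ^ (α - 2) := by
    simpa [show α - 2 - 2 = α - 4 by ring] using
      rpow_sub_two_mul_sq (norm_nonneg P) (α := α - 2) (by linarith)
  calc (α - 2) * ‖P‖ ^ (α - 4) * ⟪P, ε⟫ ^ 2 ≤ 1 * ‖P‖ ^ (α - 4) * (‖P‖ * ‖ε‖) ^ 2 := by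
        gcongr ?_ * _ * ?_
        · linarith
        · rw [← sq_abs]
          exact pow_le_pow_left₀ (abs_nonneg _) (abs_real_inner_le_norm P ε) 2
    _ = ‖P‖ ^ (α - 2) * ‖ε‖ ^ 2 := by rw [← hP]; ring

theorem abs_secondOrderRemainder_norm_rpow_div_le_of_le_two_mul {α : ℝ} (hα2 : 2 < α)
    (hα3 : α ≤ 3) {P ε : E} (h : ‖P‖ ≤ 2 * ‖ε‖) :
    |secondOrderRemainder (fun z : E => ‖z‖ ^ α / α) P ε| ≤ 81 * ‖ε‖ ^ α := by
  set R := 3 * ‖ε‖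
  have hεR : ‖ε‖ ≤ R := by linarith [norm_nonneg ε]
  have hPR : ‖P‖ ≤ R := by linarith [norm_nonneg ε]
  have hRα : R ^ (α - 2) * R ^ 2 = R ^ α := rpow_sub_two_mul_sq (by positivity) (by linarith)
  have hF (z : E) (hz : ‖z‖ ≤ R) : 0 ≤ ‖z‖ ^ α / α ∧ ‖z‖ ^ α / α ≤ R ^ α :=
    ⟨by positivity, (div_le_self (by positivity) (by linarith)).trans
      (rpow_le_rpow (norm_nonneg z) hz (by linarith))⟩
  have hFP := hF P hPR
  have hFPε := hF (P + ε) (by linarith [norm_add_le P ε])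
  have hFirst : |‖P‖ ^ (α - 2) * ⟪P, ε⟫| ≤ R ^ α :=
    calc _ = ‖P‖ ^ (α - 2) * |⟪P, ε⟫| := by rw [abs_mul, abs_of_nonneg (by positivity)]
      _ ≤ R ^ (α - 2) * R ^ 2 := by
          rw [sq]
          gcongr
          exact (abs_real_inner_le_norm P ε).trans
            (mul_le_mul hPR hεR (norm_nonneg _) (by positivity))
      _ = R ^ α := hRα
  have hSecond₁ : 0 ≤ ‖P‖ ^ (α - 2) * ‖ε‖ ^ 2 ∧ ‖P‖ ^ (α - 2) * ‖ε‖ ^ 2 ≤ R ^ α :=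
    ⟨by positivity, by rw [← hRα]; gcongr⟩
  have hSecond₂ : 0 ≤ (α - 2) * ‖P‖ ^ (α - 4) * ⟪P, ε⟫ ^ 2 := by
    have hα : 0 ≤ α - 2 := by linarith
    positivity
  have hSecond₃ := mul_rpow_sub_four_mul_inner_sq_le hα2 hα3 P ε
  have h3R : 3 * R ^ α ≤ 81 * ‖ε‖ ^ α := by
    have h3 : (3 : ℝ) ^ α ≤ 27 :=
      calc (3 : ℝ) ^ α ≤ 3 ^ (3 : ℝ) := rpow_le_rpow_of_exponent_le (by norm_num) hα3
        _ = 27 := by norm_num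
    rw [mul_rpow zero_le_three (norm_nonneg ε)]
    nlinarith [rpow_nonneg (norm_nonneg ε) α]
  rw [secondOrderRemainder_norm_rpow_div hα2, abs_le]
  constructor <;> linarith [abs_le.1 hFirst]

end NormRpow

/-- for N ≥ 4, for all P, ε ∈ ℂ,
|F(P+ε) - F(P) - dF(P)(ε) - ½d²F(P)(ε,ε)| ≲ |ε|^{4/N+2} + |P|^{4/N-1}|ε|³·𝟙_{2|ε|<|P|};
in particular on {2|ε| ≥ |P|} the remainder is ≲ |ε|^{4/N+2}, and on {2|ε| < |P|}
it is ≲ |P|^{4/N-1}|ε|³ ≲ |ε|^{4/N+2}. -/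
theorem stmt15 (N : ℕ) (hN : 4 ≤ N) :
    ∃ C > (0 : ℝ), (∀ P ε : ℂ,
      |FNL N (P + ε) - FNL N P - fderiv ℝ (FNL N) P ε -
          (1 / 2) * fderiv ℝ (fun z => fderiv ℝ (FNL N) z ε) P ε|
        ≤ C * (‖ε‖ ^ ((4 : ℝ) / N + 2) +
            (if 2 * ‖ε‖ < ‖P‖ then
              ‖P‖ ^ ((4 : ℝ) / N - 1) * ‖ε‖ ^ 3 else 0))) ∧
    (∀ P ε : ℂ, 2 * ‖ε‖ < ‖P‖ →
      ‖P‖ ^ ((4 : ℝ) / N - 1) * ‖ε‖ ^ 3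
        ≤ C * ‖ε‖ ^ ((4 : ℝ) / N + 2)) := by
  have hN' : (4 : ℝ) ≤ N := by exact_mod_cast hN
  set α : ℝ := 2 + 4 / N with hα
  have hα2 : 2 < α := by linarith [show (0 : ℝ) < 4 / N from div_pos four_pos (by linarith)]
  have hα3 : α ≤ 3 := by linarith [(div_le_one (by linarith : (0 : ℝ) < N)).2 hN']
  have hF : FNL N = fun z : ℂ => ‖z‖ ^ α / α := rfl
  rw [show (4 : ℝ) / N + 2 = α by rw [hα]; ring, show (4 : ℝ) / N - 1 = α - 3 by rw [hα]; ring]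
  refine ⟨81, by norm_num, fun P ε => ?_, fun P ε h => ?_⟩
  · change |secondOrderRemainder (FNL N) P ε| ≤ _
    rw [hF]
    split_ifs with h
    · have hnear := abs_secondOrderRemainder_norm_rpow_div_le_of_two_mul_lt hα2 hα3 h
      have : 0 ≤ ‖P‖ ^ (α - 3) * ‖ε‖ ^ 3 := by positivity
      linarith [rpow_nonneg (norm_nonneg ε) α]
    · simpa using abs_secondOrderRemainder_norm_rpow_div_le_of_le_two_mul hα2 hα3 (not_lt.1 h)
  · have := rpow_sub_three_mul_pow_three_le (by linarith) hα3 (norm_nonneg ε)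
      (by linarith [norm_nonneg ε] : ‖ε‖ ≤ ‖P‖)
    linarith [rpow_nonneg (norm_nonneg ε) α]
end
end
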